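/- In the point process model, suppose all entries of every covariate vector x_t are bounded by B ≥ 1 in absolute value. Then for every fixed d > 0, with probability at least 1 − 2/M^d, the gradient of the exponentially weighted log-likelihood at the true parameter ω satisfies ‖∇L^β(ω)‖_∞ ≤ B √( 2(d+1) N_β log M ), where N_β := W(1−β^{K+1})/(1−β) and ‖·‖_∞ denotes the entrywise maximum absolute value. -/

import Mathlib

open MeasureTheory ProbabilityTheory
open scoped BigOperators

noncomputable def logistic (u : ℝ) : ℝ := Real.exp u / (1 + Real.exp u)

/-- Entry `k` of the covariate vector `x_t = (1, s_t, s_{t−1}, …, s_{t−M+2})'`: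
for `k = 0` it is `1`, and for `k ≥ 1` it is `s_{t−k+1}`. -/
noncomputable def xEntry {Ω : Type*} (M : ℕ) (s : ℤ → Ω → ℝ) (t : ℤ) (k : Fin M)
    (ωb : Ω) : ℝ :=
  if (k : ℕ) = 0 then 1 else s (t - (k : ℕ) + 1) ωb

/-- The conditional spiking probability `λ_tΔ = logistic(⟨ω, x_t⟩)`. -/
noncomputable def lamPP {Ω : Type*} (M : ℕ) (s : ℤ → Ω → ℝ) (ω : Fin M → ℝ) (t : ℤ)
    (ωb : Ω) : ℝ :=
  logistic (∑ k : Fin M, ω k * xEntry M s t k ωb)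

/-- The σ-algebra `σ(s_{−M+1}, …, s_t)` generated by the stimuli up to time `t`. -/
def stimAlg {Ω : Type*} (M : ℕ) (s : ℤ → Ω → ℝ) (t : ℤ) : MeasurableSpace Ω :=
  ⨆ u ∈ Set.Icc (-(M : ℤ) + 1) t, MeasurableSpace.comap (s u) inferInstance

/-- The filtration `F_t := σ(s_{−M+1}, …, s_t) ⊔ σ(n_1, …, n_t)`. -/
def filtr {Ω : Type*} (M : ℕ) (s n : ℤ → Ω → ℝ) (t : ℤ) : MeasurableSpace Ω :=
  stimAlg M s t ⊔ ⨆ u ∈ Set.Icc (1 : ℤ) t, MeasurableSpace.comap (n u) inferInstance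

noncomputable def Nbeta (K W : ℕ) (β : ℝ) : ℝ := W * (1 - β ^ (K + 1)) / (1 - β)

/-!
Each coordinate of `∇L^β(ω)` is a sum over `t` of the increments `β^{K-i} x_t (n_t − λ_tΔ)`.
By the model these are martingale differences for `F_{t−1}`, bounded by `β^{K-i} B`, so the
Azuma–Hoeffding argument (`eʸ ≤ cosh b + (y/b) sinh b` on `[-b, b]` and `cosh b ≤ e^{b²/2}`)
makes every coordinate sub-Gaussian with variance proxy `B² W ∑ β^{2(K-i)} ≤ B² N_β`. Each of the
two tails beyond `B √(2(d+1) N_β log M)` then has probability at most `M^{-(d+1)}`, and a union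
bound over the `M` coordinates and both signs gives `2/M^d`.
-/

open Filter Finset Real
open scoped NNReal

-- For `b = 0` this still holds: then `y = 0`, and `sinh b / b` is the junk value `0`.
lemma Real.exp_le_cosh_add_mul_sinh_div {y b : ℝ} (hy : |y| ≤ b) :
    exp y ≤ cosh b + y * (sinh b / b) := by
  rcases (abs_nonneg y).trans hy |>.eq_or_lt with rfl | hb
  · simp [abs_nonpos_iff.1 hy]
  obtain ⟨hyl, hyu⟩ := abs_le.1 hy
  -- Convexity of `exp` between `-b` and `b`, with `y` written as a convex combination of them.
  have hconv := convexOn_exp.2 (Set.mem_univ (-b)) (Set.mem_univ b)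
    (show 0 ≤ (b - y) / (2 * b) by apply div_nonneg <;> linarith)
    (show 0 ≤ (b + y) / (2 * b) by apply div_nonneg <;> linarith)
    (by rw [← add_div, div_eq_one_iff_eq (by positivity)]; ring)
  have hy_eq : (b - y) / (2 * b) * (-b) + (b + y) / (2 * b) * b = y := by
    field_simp; ring
  simp only [smul_eq_mul, hy_eq] at hconv
  calc exp y ≤ (b - y) / (2 * b) * exp (-b) + (b + y) / (2 * b) * exp b := hconv
    _ = cosh b + y * (sinh b / b) := by
      rw [cosh_eq, sinh_eq]; field_simp; ring

section Azuma

variable {Ω : Type*} {mΩ : MeasurableSpace Ω} {μ : Measure Ω}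

lemma integral_mul_exp_le_of_integral_mul_eq_zero {G Y : Ω → ℝ} {r : ℝ} (hG : ∀ ω, 0 ≤ G ω)
    (hGi : Integrable G μ) (hGY : Integrable (fun ω ↦ G ω * Y ω) μ)
    (hY : ∀ᵐ ω ∂μ, |Y ω| ≤ r) (horth : ∫ ω, G ω * Y ω ∂μ = 0) (θ : ℝ) :
    ∫ ω, G ω * exp (θ * Y ω) ∂μ ≤ exp (r ^ 2 * θ ^ 2 / 2) * ∫ ω, G ω ∂μ := by
  set b := |θ| * r
  have hpt : ∀ᵐ ω ∂μ, G ω * exp (θ * Y ω) ≤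
      cosh b * G ω + θ * (sinh b / b) * (G ω * Y ω) := by
    filter_upwards [hY] with ω hω
    have hθY : |θ * Y ω| ≤ b := by
      rw [abs_mul]; exact mul_le_mul_of_nonneg_left hω (abs_nonneg θ)
    calc G ω * exp (θ * Y ω) ≤ G ω * (cosh b + θ * Y ω * (sinh b / b)) :=
          mul_le_mul_of_nonneg_left (exp_le_cosh_add_mul_sinh_div hθY) (hG ω)
      _ = cosh b * G ω + θ * (sinh b / b) * (G ω * Y ω) := by ring
  calc ∫ ω, G ω * exp (θ * Y ω) ∂μ
      ≤ ∫ ω, cosh b * G ω + θ * (sinh b / b) * (G ω * Y ω) ∂μ :=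
        integral_mono_of_nonneg (ae_of_all _ fun ω ↦ mul_nonneg (hG ω) (exp_pos _).le)
          ((hGi.const_mul _).add (hGY.const_mul _)) hpt
    _ = cosh b * ∫ ω, G ω ∂μ := by
        rw [integral_add (hGi.const_mul _) (hGY.const_mul _), integral_const_mul,
          integral_const_mul, horth, mul_zero, add_zero]
    _ ≤ exp (b ^ 2 / 2) * ∫ ω, G ω ∂μ :=
        mul_le_mul_of_nonneg_right (cosh_le_exp_half_sq b) (integral_nonneg hG)
    _ = exp (r ^ 2 * θ ^ 2 / 2) * ∫ ω, G ω ∂μ := by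
        rw [mul_pow, sq_abs]; ring_nf

lemma integral_mul_eq_zero_of_condExp_eq_zero {m : MeasurableSpace Ω} (hm : m ≤ mΩ)
    [SigmaFinite (μ.trim hm)] {g Y : Ω → ℝ} (hg : StronglyMeasurable[m] g)
    (hgY : Integrable (g * Y) μ) (hY : Integrable Y μ) (hcond : μ[Y | m] =ᵐ[μ] 0) :
    ∫ ω, g ω * Y ω ∂μ = 0 := by
  calc ∫ ω, g ω * Y ω ∂μ = ∫ ω, μ[g * Y | m] ω ∂μ := (integral_condExp hm).symm
    _ = ∫ ω, (g * μ[Y | m]) ω ∂μ :=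
        integral_congr_ae (condExp_mul_of_stronglyMeasurable_left hg hgY hY)
    _ = 0 := by
        rw [integral_congr_ae (EventuallyEq.rfl.mul hcond)]
        simp

variable {ℱ : ℕ → MeasurableSpace Ω} {Z : ℕ → Ω → ℝ} {R : ℕ → ℝ} {T : ℕ}

lemma ae_abs_sum_range_le (hbd : ∀ t < T, ∀ᵐ ω ∂μ, |Z t ω| ≤ R t) :
    ∀ᵐ ω ∂μ, |∑ u ∈ range T, Z u ω| ≤ ∑ u ∈ range T, R u := by
  have hbd' : ∀ᵐ ω ∂μ, ∀ u ∈ range T, |Z u ω| ≤ R u :=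
    (eventually_all_finset _).2 fun u hu ↦ hbd u (mem_range.1 hu)
  filter_upwards [hbd'] with ω h
  exact (abs_sum_le_sum_abs _ _).trans (sum_le_sum h)

lemma integrable_exp_mul_sum_range [IsFiniteMeasure μ] (hZ : ∀ t, Measurable (Z t))
    (hbd : ∀ t < T, ∀ᵐ ω ∂μ, |Z t ω| ≤ R t) (θ : ℝ) :
    Integrable (fun ω ↦ exp (θ * ∑ u ∈ range T, Z u ω)) μ :=
  integrable_exp_mul_of_mem_Icc (Finset.measurable_sum _ fun u _ ↦ hZ u).aemeasurable
    (by filter_upwards [ae_abs_sum_range_le hbd] with ω h using abs_le.1 h)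

-- Mathlib's `measure_sum_ge_le_of_hasCondSubgaussianMGF` needs `[StandardBorelSpace Ω]`,
-- which the model does not provide.
theorem mgf_sum_range_le_of_condExp_eq_zero [IsProbabilityMeasure μ] (hℱ : ∀ t, ℱ t ≤ mΩ)
    (hZ : ∀ t, Measurable (Z t)) (hadapt : ∀ u t, u < t → Measurable[ℱ t] (Z u))
    (hbd : ∀ t < T, ∀ᵐ ω ∂μ, |Z t ω| ≤ R t) (hcond : ∀ t < T, μ[Z t | ℱ t] =ᵐ[μ] 0)
    (θ : ℝ) :
    mgf (fun ω ↦ ∑ u ∈ range T, Z u ω) μ θ ≤ exp ((∑ u ∈ range T, R u ^ 2) * θ ^ 2 / 2) := by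
  induction T with
  | zero => simp
  | succ T ih =>
    have hbdT : ∀ t < T, ∀ᵐ ω ∂μ, |Z t ω| ≤ R t := fun t ht ↦ hbd t (by omega)
    set G := fun ω ↦ exp (θ * ∑ u ∈ range T, Z u ω)
    have hGi : Integrable G μ := integrable_exp_mul_sum_range hZ hbdT θ
    have hZT : Integrable (Z T) μ :=
      .of_bound (hZ T).aestronglyMeasurable (R T) (by simpa using hbd T (by omega))
    have hGZ : Integrable (fun ω ↦ G ω * Z T ω) μ :=
      hGi.mul_bdd (hZ T).aestronglyMeasurable (by simpa using hbd T (by omega))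
    have hG_meas : StronglyMeasurable[ℱ T] G :=
      ((Finset.measurable_sum _ fun u hu ↦ hadapt u T (mem_range.1 hu)).const_mul θ).exp
        |>.stronglyMeasurable
    have horth : ∫ ω, G ω * Z T ω ∂μ = 0 :=
      integral_mul_eq_zero_of_condExp_eq_zero (hℱ T) hG_meas hGZ hZT (hcond T (by omega))
    calc mgf (fun ω ↦ ∑ u ∈ range (T + 1), Z u ω) μ θ
        = ∫ ω, G ω * exp (θ * Z T ω) ∂μ := by
          simp only [mgf, G, sum_range_succ, mul_add, exp_add]
      _ ≤ exp (R T ^ 2 * θ ^ 2 / 2) * mgf (fun ω ↦ ∑ u ∈ range T, Z u ω) μ θ :=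
          integral_mul_exp_le_of_integral_mul_eq_zero (fun ω ↦ (exp_pos _).le) hGi hGZ
            (hbd T (by omega)) horth θ
      _ ≤ exp (R T ^ 2 * θ ^ 2 / 2) * exp ((∑ u ∈ range T, R u ^ 2) * θ ^ 2 / 2) := by
          gcongr
          exact ih hbdT fun t ht ↦ hcond t (by omega)
      _ = exp ((∑ u ∈ range (T + 1), R u ^ 2) * θ ^ 2 / 2) := by
          rw [← exp_add, sum_range_succ]; ring_nf

theorem hasSubgaussianMGF_sum_range_of_condExp_eq_zero [IsProbabilityMeasure μ]
    (hℱ : ∀ t, ℱ t ≤ mΩ) (hZ : ∀ t, Measurable (Z t))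
    (hadapt : ∀ u t, u < t → Measurable[ℱ t] (Z u))
    (hbd : ∀ t < T, ∀ᵐ ω ∂μ, |Z t ω| ≤ R t) (hcond : ∀ t < T, μ[Z t | ℱ t] =ᵐ[μ] 0)
    {c : ℝ≥0} (hc : ∑ u ∈ range T, R u ^ 2 ≤ c) :
    HasSubgaussianMGF (fun ω ↦ ∑ u ∈ range T, Z u ω) c μ where
  integrable_exp_mul := integrable_exp_mul_sum_range hZ hbd
  mgf_le θ := (mgf_sum_range_le_of_condExp_eq_zero hℱ hZ hadapt hbd hcond θ).trans <| by
    gcongr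

lemma one_sub_le_measureReal_forall_abs_le [IsProbabilityMeasure μ] {ι : Type*} [Fintype ι]
    {S : ι → Ω → ℝ} {c : ℝ≥0} (hS : ∀ i, HasSubgaussianMGF (S i) c μ) {a : ℝ} (ha : 0 ≤ a) :
    1 - 2 * Fintype.card ι * exp (-a ^ 2 / (2 * c)) ≤ μ.real {ω | ∀ i, |S i ω| ≤ a} := by
  set E := {ω | ∀ i, |S i ω| ≤ a}
  have hcover : Eᶜ ⊆ ⋃ i, ({ω | a ≤ S i ω} ∪ {ω | a ≤ (-S i) ω}) := by
    intro ω hω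
    obtain ⟨i, hi⟩ := not_forall.1 hω
    rcases lt_abs.1 (not_le.1 hi) with h | h
    · exact Set.mem_iUnion.2 ⟨i, Or.inl h.le⟩
    · exact Set.mem_iUnion.2 ⟨i, Or.inr h.le⟩
  have hcompl : μ.real Eᶜ ≤ 2 * Fintype.card ι * exp (-a ^ 2 / (2 * c)) :=
    calc μ.real Eᶜ
        ≤ ∑ i, (μ.real {ω | a ≤ S i ω} + μ.real {ω | a ≤ (-S i) ω}) :=
          (measureReal_mono hcover).trans <| (measureReal_iUnion_fintype_le _).trans <|
            sum_le_sum fun i _ ↦ measureReal_union_le _ _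
      _ ≤ ∑ _i : ι, (exp (-a ^ 2 / (2 * c)) + exp (-a ^ 2 / (2 * c))) :=
          sum_le_sum fun i _ ↦ add_le_add ((hS i).measure_ge_le ha) ((hS i).neg.measure_ge_le ha)
      _ = 2 * Fintype.card ι * exp (-a ^ 2 / (2 * c)) := by
          rw [sum_const, card_univ, nsmul_eq_mul]; ring
  have hunion : 1 ≤ μ.real E + μ.real Eᶜ := by
    simpa [Set.union_compl_self] using measureReal_union_le (μ := μ) E Eᶜ
  linarith

end Azuma

lemma sum_Icc_Icc_eq_sum_range_mul {α : Type*} [AddCommMonoid α] (K W : ℕ) (F : ℕ → ℕ → α) :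
    ∑ i ∈ Icc 1 K, ∑ j ∈ Icc 1 W, F i ((i - 1) * W + j) =
      ∑ u ∈ range (K * W), F (u / W + 1) (u + 1) := by
  induction K with
  | zero => simp
  | succ K ih =>
    rw [sum_Icc_succ_top (by omega), ih, add_mul, one_mul, sum_range_add, Nat.add_sub_cancel,
      ← Finset.Ico_add_one_right_eq_Icc, sum_Ico_eq_sum_range, Nat.add_sub_cancel]
    congr 1
    refine sum_congr rfl fun j hj ↦ ?_
    have hj : j < W := mem_range.1 hj
    rw [Nat.add_comm (K * W) j, Nat.add_mul_div_right _ _ (by omega), Nat.div_eq_of_lt hj]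
    congr 1 <;> ring

lemma sum_range_pow_sub_div_le_Nbeta {β : ℝ} (hβ0 : 0 ≤ β) (hβ1 : β < 1) (K W : ℕ) :
    ∑ u ∈ range (K * W), β ^ (K - (u / W + 1)) ≤ Nbeta K W β := by
  have hreindex := sum_Icc_Icc_eq_sum_range_mul K W fun i _ ↦ β ^ (K - i)
  rw [← hreindex]
  simp only [sum_const, Nat.card_Icc, Nat.add_sub_cancel, nsmul_eq_mul, ← mul_sum]
  have hsub : ∑ i ∈ Icc 1 K, β ^ (K - i) ≤ ∑ i ∈ range (K + 1), β ^ (K - i) :=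
    sum_le_sum_of_subset_of_nonneg (fun i hi ↦ by simp only [mem_Icc, mem_range] at hi ⊢; omega)
      fun i _ _ ↦ pow_nonneg hβ0 _
  have hgeom : ∑ i ∈ range (K + 1), β ^ (K - i) = (1 - β ^ (K + 1)) / (1 - β) := by
    have := sum_range_reflect (fun r ↦ β ^ r) (K + 1)
    simp only [Nat.add_sub_cancel] at this
    rw [this, geom_sum_eq hβ1.ne, ← neg_div_neg_eq, neg_sub, neg_sub]
  rw [Nbeta, mul_div_assoc, ← hgeom]
  exact mul_le_mul_of_nonneg_left hsub (Nat.cast_nonneg W)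

lemma sum_range_sq_pow_mul_le_Nbeta {β : ℝ} (hβ0 : 0 ≤ β) (hβ1 : β < 1) (K W : ℕ) (B : ℝ) :
    ∑ u ∈ range (K * W), (β ^ (K - (u / W + 1)) * B) ^ 2 ≤ B ^ 2 * Nbeta K W β :=
  calc ∑ u ∈ range (K * W), (β ^ (K - (u / W + 1)) * B) ^ 2
      = B ^ 2 * ∑ u ∈ range (K * W), (β ^ (K - (u / W + 1))) ^ 2 := by
        rw [mul_sum]; exact sum_congr rfl fun u _ ↦ by ring
    _ ≤ B ^ 2 * ∑ u ∈ range (K * W), β ^ (K - (u / W + 1)) := by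
        gcongr with u
        exact pow_le_of_le_one (pow_nonneg hβ0 _) (pow_le_one₀ hβ0 hβ1.le) two_ne_zero
    _ ≤ B ^ 2 * Nbeta K W β :=
        mul_le_mul_of_nonneg_left (sum_range_pow_sub_div_le_Nbeta hβ0 hβ1 K W) (sq_nonneg B)

lemma Nbeta_pos {K W : ℕ} (hW : 1 ≤ W) {β : ℝ} (hβ0 : 0 ≤ β) (hβ1 : β < 1) :
    0 < Nbeta K W β := by
  have hpow : β ^ (K + 1) < 1 := pow_lt_one₀ hβ0 hβ1 (by omega)
  have hW' : (0 : ℝ) < W := by exact_mod_cast hW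
  exact div_pos (mul_pos hW' (by linarith)) (by linarith)

lemma mul_exp_neg_add_one_mul_log {x : ℝ} (hx : 0 < x) (d : ℝ) :
    x * exp (-((d + 1) * log x)) = 1 / x ^ d := by
  rw [← neg_mul, mul_comm (-(d + 1)), ← rpow_def_of_pos hx]
  calc x * x ^ (-(d + 1)) = x ^ (1 : ℝ) * x ^ (-(d + 1)) := by rw [rpow_one]
    _ = x ^ (-d) := by rw [← rpow_add hx]; ring_nf
    _ = 1 / x ^ d := by rw [rpow_neg hx.le, one_div]

section PointProcess

variable {Ω : Type*} {mΩ : MeasurableSpace Ω} {μ : Measure Ω} {M : ℕ} {s n : ℤ → Ω → ℝ}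
  {ω : Fin M → ℝ}

/-- The summand `x_t (n_t − λ_tΔ)` of the gradient `∇L^β(ω)`, in coordinate `k`. -/
noncomputable def scoreIncrement (M : ℕ) (s n : ℤ → Ω → ℝ) (ω : Fin M → ℝ) (t : ℤ) (k : Fin M)
    (ωb : Ω) : ℝ :=
  xEntry M s t k ωb * (n t ωb - lamPP M s ω t ωb)

lemma logistic_mem_Icc (u : ℝ) : logistic u ∈ Set.Icc 0 1 := by
  unfold logistic
  constructor
  · positivity
  · rw [div_le_one (by positivity)]; linarith

lemma measurable_logistic : Measurable logistic := by
  unfold logistic; fun_prop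

lemma abs_sub_lamPP_le_one {t : ℤ} {ωb : Ω} (hn : n t ωb = 0 ∨ n t ωb = 1) :
    |n t ωb - lamPP M s ω t ωb| ≤ 1 := by
  obtain ⟨h0, h1⟩ := logistic_mem_Icc (∑ k : Fin M, ω k * xEntry M s t k ωb)
  rw [abs_le]
  rcases hn with h | h <;> rw [h] <;> constructor <;> unfold lamPP <;> linarith

lemma stimAlg_le (hs : ∀ u, Measurable (s u)) (t : ℤ) : stimAlg M s t ≤ mΩ :=
  iSup₂_le fun u _ ↦ (hs u).comap_le

lemma filtr_le (hs : ∀ u, Measurable (s u)) (hn : ∀ u, Measurable (n u)) (t : ℤ) :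
    filtr M s n t ≤ mΩ :=
  sup_le (stimAlg_le hs t) (iSup₂_le fun u _ ↦ (hn u).comap_le)

lemma measurable_stimAlg {t u : ℤ} (h1 : -(M : ℤ) + 1 ≤ u) (h2 : u ≤ t) :
    Measurable[stimAlg M s t] (s u) :=
  measurable_iff_comap_le.2 <| le_iSup₂_of_le u (Set.mem_Icc.2 ⟨h1, h2⟩) le_rfl

lemma measurable_filtr {t u : ℤ} (h1 : 1 ≤ u) (h2 : u ≤ t) : Measurable[filtr M s n t] (n u) := by
  unfold filtr
  exact measurable_iff_comap_le.2 <|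
    (le_biSup (fun u ↦ MeasurableSpace.comap (n u) inferInstance)
      (Set.mem_Icc.2 ⟨h1, h2⟩)).trans le_sup_right

lemma measurable_xEntry_stimAlg {t t' : ℤ} (ht : -1 ≤ t) (htt' : t ≤ t') (k : Fin M) :
    Measurable[stimAlg M s t'] (xEntry M s t k) := by
  unfold xEntry
  split_ifs with hk
  · exact measurable_const
  · exact measurable_stimAlg (by omega) (by omega)

lemma measurable_lamPP_stimAlg {t t' : ℤ} (ht : -1 ≤ t) (htt' : t ≤ t') :
    Measurable[stimAlg M s t'] (lamPP M s ω t) :=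
  measurable_logistic.comp <| Finset.measurable_sum _ fun k _ ↦
    (measurable_xEntry_stimAlg ht htt' k).const_mul _

lemma measurable_scoreIncrement_filtr {t t' : ℤ} (ht : 1 ≤ t) (htt' : t ≤ t') (k : Fin M) :
    Measurable[filtr M s n t'] (scoreIncrement M s n ω t k) := by
  have hstim : stimAlg M s t' ≤ filtr M s n t' := le_sup_left
  exact ((measurable_xEntry_stimAlg (by omega) htt' k).mono hstim le_rfl).mul
    ((measurable_filtr ht htt').sub ((measurable_lamPP_stimAlg (by omega) htt').mono hstim le_rfl))

lemma ae_abs_xEntry_le {B : ℝ} (hB : 1 ≤ B) {t : ℤ} {k : Fin M}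
    (hs : (k : ℕ) ≠ 0 → ∀ᵐ ωb ∂μ, |s (t - (k : ℕ) + 1) ωb| ≤ B) :
    ∀ᵐ ωb ∂μ, |xEntry M s t k ωb| ≤ B := by
  unfold xEntry
  split_ifs with hk
  · exact ae_of_all _ fun _ ↦ by simpa using hB
  · exact hs hk

lemma ae_abs_scoreIncrement_le {B : ℝ} {t : ℤ} {k : Fin M} (hn01 : ∀ ωb, n t ωb = 0 ∨ n t ωb = 1)
    (hx : ∀ᵐ ωb ∂μ, |xEntry M s t k ωb| ≤ B) :
    ∀ᵐ ωb ∂μ, |scoreIncrement M s n ω t k ωb| ≤ B := by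
  filter_upwards [hx] with ωb hxb
  rw [scoreIncrement, abs_mul]
  exact (mul_le_of_le_one_right (abs_nonneg _) (abs_sub_lamPP_le_one (hn01 ωb))).trans hxb

theorem condExp_scoreIncrement_eq_zero [IsFiniteMeasure μ] (hs : ∀ u, Measurable (s u))
    (hn : ∀ u, Measurable (n u)) {t : ℤ} (ht : -1 ≤ t) (hn01 : ∀ ωb, n t ωb = 0 ∨ n t ωb = 1)
    {k : Fin M} (hx : Integrable (xEntry M s t k) μ)
    (hmodel : μ[n t | filtr M s n (t - 1) ⊔ stimAlg M s t] =ᵐ[μ] lamPP M s ω t) :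
    μ[scoreIncrement M s n ω t k | filtr M s n (t - 1)] =ᵐ[μ] 0 := by
  set H := filtr M s n (t - 1) ⊔ stimAlg M s t
  have hH : H ≤ mΩ := sup_le (filtr_le hs hn _) (stimAlg_le hs _)
  have hstimH : stimAlg M s t ≤ H := le_sup_right
  have hxH : StronglyMeasurable[H] (xEntry M s t k) :=
    ((measurable_xEntry_stimAlg ht le_rfl k).mono hstimH le_rfl).stronglyMeasurable
  have hlamH : StronglyMeasurable[H] (lamPP M s ω t) :=
    ((measurable_lamPP_stimAlg ht le_rfl).mono hstimH le_rfl).stronglyMeasurable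
  have hlam : Integrable (lamPP M s ω t) μ :=
    .of_bound (hlamH.mono hH).aestronglyMeasurable 1 <| ae_of_all _ fun ωb ↦ by
      obtain ⟨h0, h1⟩ := logistic_mem_Icc (∑ k : Fin M, ω k * xEntry M s t k ωb)
      rw [Real.norm_eq_abs, abs_le]; unfold lamPP; constructor <;> linarith
  have hnt : Integrable (n t) μ :=
    .of_bound (hn t).aestronglyMeasurable 1 <| ae_of_all _ fun ωb ↦ by
      rcases hn01 ωb with h | h <;> simp [h]
  have hdiff : Integrable (n t - lamPP M s ω t) μ := hnt.sub hlam
  have hprod : Integrable (xEntry M s t k * (n t - lamPP M s ω t)) μ :=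
    hx.mul_bdd (hdiff.aestronglyMeasurable) <| ae_of_all _ fun ωb ↦ by
      simpa using abs_sub_lamPP_le_one (hn01 ωb)
  have hdiff_cond : μ[n t - lamPP M s ω t | H] =ᵐ[μ] 0 := by
    filter_upwards [condExp_sub hnt hlam H, hmodel] with ωb h1 h2
    rw [h1, Pi.sub_apply, h2, condExp_of_stronglyMeasurable hH hlamH hlam, sub_self, Pi.zero_apply]
  have hH_cond : μ[scoreIncrement M s n ω t k | H] =ᵐ[μ] 0 := by
    filter_upwards [condExp_mul_of_stronglyMeasurable_left hxH hprod hdiff, hdiff_cond]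
      with ωb h1 h2
    change μ[xEntry M s t k * (n t - lamPP M s ω t) | H] ωb = 0
    rw [h1, Pi.mul_apply, h2, Pi.zero_apply, mul_zero]
  calc μ[scoreIncrement M s n ω t k | filtr M s n (t - 1)]
      =ᵐ[μ] μ[μ[scoreIncrement M s n ω t k | H] | filtr M s n (t - 1)] :=
        (condExp_condExp_of_le le_sup_left hH).symm
    _ =ᵐ[μ] μ[0 | filtr M s n (t - 1)] := condExp_congr_ae hH_cond
    _ = 0 := condExp_zero

theorem hasSubgaussianMGF_sum_range_scoreIncrement [IsProbabilityMeasure μ]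
    (hs : ∀ u, Measurable (s u)) (hn : ∀ u, Measurable (n u)) {B : ℝ} (hB : 1 ≤ B) {T : ℕ}
    (hbd : ∀ t : ℤ, -(M : ℤ) + 1 ≤ t → t ≤ T → ∀ᵐ ωb ∂μ, |s t ωb| ≤ B)
    (hn01 : ∀ t : ℤ, ∀ ωb, n t ωb = 0 ∨ n t ωb = 1)
    (hmodel : ∀ t : ℤ, 1 ≤ t → t ≤ T →
      μ[n t | filtr M s n (t - 1) ⊔ stimAlg M s t] =ᵐ[μ] fun ωb ↦ lamPP M s ω t ωb)
    (w : ℕ → ℝ) (k : Fin M) {c : ℝ≥0} (hc : ∑ u ∈ range T, (w u * B) ^ 2 ≤ c) :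
    HasSubgaussianMGF
      (fun ωb ↦ ∑ u ∈ range T, w u * scoreIncrement M s n ω ((u + 1 : ℕ) : ℤ) k ωb) c μ := by
  have hk := k.isLt
  have hx : ∀ u < T, ∀ᵐ ωb ∂μ, |xEntry M s ((u + 1 : ℕ) : ℤ) k ωb| ≤ B := fun u hu ↦
    ae_abs_xEntry_le hB fun hk0 ↦ hbd _ (by omega) (by omega)
  refine hasSubgaussianMGF_sum_range_of_condExp_eq_zero (ℱ := fun u ↦ filtr M s n u)
    (R := fun u ↦ |w u| * B) (fun u ↦ filtr_le hs hn u)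
    (fun u ↦ ((measurable_scoreIncrement_filtr (by omega) le_rfl k).mono (filtr_le hs hn _)
      le_rfl).const_mul _)
    (fun u t hut ↦ (measurable_scoreIncrement_filtr (by omega) (by omega) k).const_mul _)
    (fun u hu ↦ ?_) (fun u hu ↦ ?_) (by simpa only [mul_pow, sq_abs] using hc)
  · filter_upwards [ae_abs_scoreIncrement_le (hn01 _) (hx u hu)] with ωb h
    rw [abs_mul]
    exact mul_le_mul_of_nonneg_left h (abs_nonneg _)
  · have hxint : Integrable (xEntry M s ((u + 1 : ℕ) : ℤ) k) μ :=
      .of_bound (((measurable_xEntry_stimAlg (by omega) le_rfl k).mono (stimAlg_le hs _)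
        le_rfl).aestronglyMeasurable) B (by simpa only [Real.norm_eq_abs] using hx u hu)
    have hcond := condExp_scoreIncrement_eq_zero hs hn (by omega) (hn01 _) hxint
      (hmodel _ (by omega) (by omega))
    rw [show ((u + 1 : ℕ) : ℤ) - 1 = u by push_cast; ring] at hcond
    filter_upwards [condExp_smul (w u) (scoreIncrement M s n ω ((u + 1 : ℕ) : ℤ) k)
      (filtr M s n u), hcond] with ωb h1 h2
    exact h1.trans (by rw [Pi.smul_apply, h2, Pi.zero_apply, smul_zero])

end PointProcess

theorem stmt12_general {Ω : Type*} {mΩ : MeasurableSpace Ω} (μ : Measure Ω)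
    [IsProbabilityMeasure μ]
    (M K W : ℕ) (hM : 2 ≤ M) (hW : 1 ≤ W)
    (β : ℝ) (hβ0 : 0 < β) (hβ1 : β < 1) (B : ℝ) (hB : 1 ≤ B)
    (s : ℤ → Ω → ℝ) (n : ℤ → Ω → ℝ) (ω : Fin M → ℝ)
    (hsmeas : ∀ t, Measurable (s t)) (hnmeas : ∀ t, Measurable (n t))
    (hbd : ∀ t : ℤ, -(M : ℤ) + 1 ≤ t → t ≤ (K * W : ℕ) → ∀ᵐ ωb ∂μ, |s t ωb| ≤ B)
    (hn01 : ∀ t : ℤ, ∀ ωb, n t ωb = 0 ∨ n t ωb = 1)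
    (hmodel : ∀ t : ℤ, 1 ≤ t → t ≤ (K * W : ℕ) →
      μ[n t | filtr M s n (t - 1) ⊔ stimAlg M s t] =ᵐ[μ]
        fun ωb => lamPP M s ω t ωb)
    (d : ℝ) (hd : 0 < d) :
    1 - 2 / (M : ℝ) ^ d ≤
      (μ {ωb | ∀ m : Fin M,
        |∑ i ∈ Finset.Icc 1 K, ∑ j ∈ Finset.Icc 1 W,
          β ^ (K - i) * (xEntry M s (((i - 1) * W + j : ℕ) : ℤ) m ωb *
            (n (((i - 1) * W + j : ℕ) : ℤ) ωb -
              lamPP M s ω (((i - 1) * W + j : ℕ) : ℤ) ωb))| ≤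
          B * Real.sqrt (2 * (d + 1) * Nbeta K W β * Real.log M)}).toReal := by
  have hN := Nbeta_pos (K := K) hW hβ0.le hβ1
  have hM0 : (0 : ℝ) < M := by positivity
  have hlogM : 0 < log M := log_pos (by exact_mod_cast hM)
  set a := B * √(2 * (d + 1) * Nbeta K W β * log M)
  set c : ℝ≥0 := ⟨B ^ 2 * Nbeta K W β, by positivity⟩
  set w : ℕ → ℝ := fun u ↦ β ^ (K - (u / W + 1))
  have hc : ∑ u ∈ range (K * W), (w u * B) ^ 2 ≤ c :=
    sum_range_sq_pow_mul_le_Nbeta hβ0.le hβ1 K W B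
  have hrate : 2 * Fintype.card (Fin M) * exp (-a ^ 2 / (2 * c)) = 2 / M ^ d := by
    have ha : a ^ 2 = B ^ 2 * (2 * (d + 1) * Nbeta K W β * log M) := by
      rw [mul_pow, sq_sqrt (by positivity)]
    have hexp : -a ^ 2 / (2 * c) = -((d + 1) * log M) := by
      rw [ha, show (c : ℝ) = B ^ 2 * Nbeta K W β from rfl]; field_simp
    rw [hexp, Fintype.card_fin, mul_assoc, mul_exp_neg_add_one_mul_log hM0, mul_one_div]
  have hsum : ∀ (m : Fin M) (ωb : Ω),
      ∑ i ∈ Icc 1 K, ∑ j ∈ Icc 1 W,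
        β ^ (K - i) * (xEntry M s (((i - 1) * W + j : ℕ) : ℤ) m ωb *
          (n (((i - 1) * W + j : ℕ) : ℤ) ωb - lamPP M s ω (((i - 1) * W + j : ℕ) : ℤ) ωb)) =
      ∑ u ∈ range (K * W), w u * scoreIncrement M s n ω ((u + 1 : ℕ) : ℤ) m ωb :=
    fun m ωb ↦ sum_Icc_Icc_eq_sum_range_mul K W fun i t ↦
      β ^ (K - i) * scoreIncrement M s n ω t m ωb
  simp only [hsum]
  calc 1 - 2 / (M : ℝ) ^ d = 1 - 2 * Fintype.card (Fin M) * exp (-a ^ 2 / (2 * c)) := by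
        rw [hrate]
    _ ≤ _ := one_sub_le_measureReal_forall_abs_le (fun m ↦
          hasSubgaussianMGF_sum_range_scoreIncrement hsmeas hnmeas hB hbd hn01 hmodel w m hc)
          (by positivity)

/-- in the point process model, if all entries of every covariate
vector are bounded by `B ≥ 1` in absolute value, then for every fixed `d > 0`, with
probability at least `1 − 2/M^d`, the gradient of the exponentially weighted
log-likelihood at the true parameter `ω` satisfies
`‖∇L^β(ω)‖_∞ ≤ B√(2(d+1) N_β log M)`. -/
theorem stmt12 {Ω : Type*} {mΩ : MeasurableSpace Ω} (μ : Measure Ω)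
    [IsProbabilityMeasure μ]
    (M K W : ℕ) (hM : 2 ≤ M) (hK : 1 ≤ K) (hW : 1 ≤ W)
    (β : ℝ) (hβ0 : 0 < β) (hβ1 : β < 1) (σR B : ℝ) (hσ : 0 < σR) (hB : 1 ≤ B)
    (s : ℤ → Ω → ℝ) (n : ℤ → Ω → ℝ) (ω : Fin M → ℝ)
    (hsmeas : ∀ t, Measurable (s t)) (hnmeas : ∀ t, Measurable (n t))
    (hindep : iIndepFun
      (fun t : ↥(Set.Icc (-(M : ℤ) + 1) ((K * W : ℕ) : ℤ)) => s t) μ)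
    (hmean : ∀ t : ℤ, -(M : ℤ) + 1 ≤ t → t ≤ (K * W : ℕ) → ∫ ωb, s t ωb ∂μ = 0)
    (hvar : ∀ t : ℤ, -(M : ℤ) + 1 ≤ t → t ≤ (K * W : ℕ) →
      ∫ ωb, (s t ωb) ^ 2 ∂μ = σR ^ 2)
    (hbd : ∀ t : ℤ, -(M : ℤ) + 1 ≤ t → t ≤ (K * W : ℕ) → ∀ᵐ ωb ∂μ, |s t ωb| ≤ B)
    (hn01 : ∀ t : ℤ, ∀ ωb, n t ωb = 0 ∨ n t ωb = 1)
    (hmodel : ∀ t : ℤ, 1 ≤ t → t ≤ (K * W : ℕ) →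
      μ[n t | filtr M s n (t - 1) ⊔ stimAlg M s t] =ᵐ[μ]
        fun ωb => lamPP M s ω t ωb)
    (d : ℝ) (hd : 0 < d) :
    1 - 2 / (M : ℝ) ^ d ≤
      (μ {ωb | ∀ m : Fin M,
        |∑ i ∈ Finset.Icc 1 K, ∑ j ∈ Finset.Icc 1 W,
          β ^ (K - i) * (xEntry M s (((i - 1) * W + j : ℕ) : ℤ) m ωb *
            (n (((i - 1) * W + j : ℕ) : ℤ) ωb -
              lamPP M s ω (((i - 1) * W + j : ℕ) : ℤ) ωb))| ≤
          B * Real.sqrt (2 * (d + 1) * Nbeta K W β * Real.log M)}).toReal :=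
  stmt12_general (mΩ := mΩ) μ M K W hM hW β hβ0 hβ1 B hB s n ω hsmeas hnmeas hbd hn01 hmodel d hd
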